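/- Let V be a finite-dimensional complex vector space equipped with a non-degenerate alternating bilinear form Q, and let R ⊆ V be a subset that spans V. For δ ∈ R let T_δ be the transvection x ↦ x + Q(x,δ)δ, and let M be the smallest algebraic subgroup of the symplectic group Sp(V,Q) containing all the transvections T_δ (δ ∈ R). Suppose that R consists of a finite union of orbits of the action of M on V. Then one of the following holds: (i) there exists a subspace U of V with U ≠ {0} and U ≠ V, invariant under every element of M, such that R ⊆ U ∪ U^⊥; or (ii) M = Sp(V,Q). -/

import Mathlib

/-!
Being algebraic, `M` contains with each transvection `T_δ = 1 + N_δ` (`δ ∈ R`, `N_δ² = 0`) the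
whole one-parameter group `1 + t N_δ`. As `R` is `M`-stable, `x + c y ∈ R` whenever `x, y ∈ R`
and `Q(x,y) ≠ 0`.

Join `x, y ∈ R` when `Q(x,y) ≠ 0`. If the component of some nonzero `v ∈ R` spans a proper
subspace `U`, the rest of `R` is orthogonal to `U`; so `R ⊆ U ∪ Uᗮ`, and every `T_δ`, hence `M`,
stabilises `U`. Otherwise the graph is connected, and walking along paths yields, for finitely
many nonzero vectors, an element of `R` pairing nontrivially with each of them. Through such a
common neighbour, `R ∪ {0}` is closed under addition, so `R` contains every nonzero vector. Then
`M` contains all transvections, and these generate `Sp(V,Q)`: a symplectic map fixing a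
nondegenerate subspace `W` is corrected by transvections until it also fixes a hyperbolic pair
of `Wᗮ`, and one inducts on `W`.
-/

/-- A function `End(V) → ℂ` is a polynomial function if it lies in the ℂ-algebra generated
by the linear functionals on `End(V)` (equivalently, it is a polynomial in the matrix
entries with respect to any basis). -/
def IsPolyFun (V : Type*) [AddCommGroup V] [Module ℂ V]
    (f : Module.End ℂ V → ℂ) : Prop :=
  f ∈ Algebra.adjoin ℂ {g : Module.End ℂ V → ℂ | ∃ φ : Module.End ℂ V →ₗ[ℂ] ℂ, g = ⇑φ}

/-- A subset of `End(V)` is Zariski closed if it is the common zero set of a family of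
polynomial functions. -/
def IsZarClosed (V : Type*) [AddCommGroup V] [Module ℂ V]
    (Z : Set (Module.End ℂ V)) : Prop :=
  ∃ S : Set (Module.End ℂ V → ℂ), (∀ f ∈ S, IsPolyFun V f) ∧
    Z = {A | ∀ f ∈ S, f A = 0}

/-- An algebraic subgroup of `GL(V)` is a subgroup which is the intersection of `GL(V)`
with a Zariski closed subset of `End(V)`. -/
def IsAlgSubgroup (V : Type*) [AddCommGroup V] [Module ℂ V]
    (H : Subgroup (Module.End ℂ V)ˣ) : Prop :=
  ∃ Z : Set (Module.End ℂ V), IsZarClosed V Z ∧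
    (H : Set (Module.End ℂ V)ˣ) = {g : (Module.End ℂ V)ˣ | (g : Module.End ℂ V) ∈ Z}

open Module

section Transvection

variable {K V : Type*} [Field K] [AddCommGroup V] [Module K V] {Q : V →ₗ[K] V →ₗ[K] K}

variable (Q) in
def symplecticGroup : Subgroup (End K V)ˣ where
  carrier := {g | ∀ x y, Q ((g : End K V) x) ((g : End K V) y) = Q x y}
  mul_mem' {a b} ha hb x y := (ha (b.val x) (b.val y)).trans (hb x y)
  one_mem' _ _ := rfl
  inv_mem' {a} ha x y := by
    simpa only [← End.mul_apply, ← Units.val_mul, mul_inv_cancel, Units.val_one, End.one_apply]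
      using (ha (a⁻¹.val x) (a⁻¹.val y)).symm

/-- The symplectic transvection `x ↦ x + t Q(x,δ) δ`; it is invertible because its nilpotent
part squares to zero. -/
def symplecticTransvection (hQ : Q.IsAlt) (δ : V) (t : K) : (End K V)ˣ where
  val := 1 + t • (Q.flip δ).smulRight δ
  inv := 1 + (-t) • (Q.flip δ).smulRight δ
  val_inv := by ext x; simp [hQ.self_eq_zero]
  inv_val := by ext x; simp [hQ.self_eq_zero]

variable (hQ : Q.IsAlt)

lemma symplecticTransvection_apply (δ : V) (t : K) (x : V) :
    (symplecticTransvection hQ δ t : End K V) x = x + (t * Q x δ) • δ := by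
  simp [symplecticTransvection, mul_smul]

lemma symplecticTransvection_apply_of_eq_zero {δ x : V} (t : K) (h : Q x δ = 0) :
    (symplecticTransvection hQ δ t : End K V) x = x := by
  simp [symplecticTransvection_apply, h]

lemma symplecticTransvection_zero (t : K) : symplecticTransvection hQ 0 t = 1 := by
  ext x; simp [symplecticTransvection_apply]

lemma symplecticTransvection_mem_symplecticGroup (δ : V) (t : K) :
    symplecticTransvection hQ δ t ∈ symplecticGroup Q := by
  intro x y
  simp only [symplecticTransvection_apply, map_add, map_smul, LinearMap.add_apply,
    LinearMap.smul_apply, smul_eq_mul, hQ.self_eq_zero, ← hQ.neg y δ]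
  ring

end Transvection

section Stabilizer

variable {K V : Type*} [Field K] [AddCommGroup V] [Module K V] [FiniteDimensional K V]

def submoduleStabilizer (U : Submodule K V) : Subgroup (End K V)ˣ where
  carrier := {g | ∀ u ∈ U, (g : End K V) u ∈ U}
  mul_mem' ha hb u hu := ha _ (hb u hu)
  one_mem' _ hu := hu
  inv_mem' {g} hg u hu := by
    let e := LinearMap.GeneralLinearGroup.toLinearEquiv g
    have hUe : U.map (e : V →ₗ[K] V) = U :=
      Submodule.eq_of_le_of_finrank_eq (Submodule.map_le_iff_le_comap.mpr hg) (e.finrank_map_eq U)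
    obtain ⟨x, hx, rfl⟩ := hUe.ge hu
    simpa [e, ← End.mul_apply] using hx

end Stabilizer

section Generation

open LinearMap (BilinForm)

variable {K V : Type*} [Field K] [AddCommGroup V] [Module K V] {Q : V →ₗ[K] V →ₗ[K] K}
  (hQ : Q.IsAlt)

def transvectionGroup : Subgroup (End K V)ˣ :=
  Subgroup.closure (Set.range fun p : V × K => symplecticTransvection hQ p.1 p.2)

lemma symplecticTransvection_mem_transvectionGroup (δ : V) (t : K) :
    symplecticTransvection hQ δ t ∈ transvectionGroup hQ :=
  Subgroup.subset_closure ⟨(δ, t), rfl⟩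

lemma transvectionGroup_le_symplecticGroup : transvectionGroup hQ ≤ symplecticGroup Q :=
  (Subgroup.closure_le _).mpr <| Set.range_subset_iff.mpr fun p =>
    symplecticTransvection_mem_symplecticGroup hQ p.1 p.2

def TransvectionCarries (X : Set V) (a b : V) : Prop :=
  ∃ h ∈ transvectionGroup hQ, (∀ x ∈ X, (h : End K V) x = x) ∧ (h : End K V) a = b

variable {hQ}

lemma TransvectionCarries.trans {X : Set V} {a b c : V} (hab : TransvectionCarries hQ X a b)
    (hbc : TransvectionCarries hQ X b c) : TransvectionCarries hQ X a c := by
  obtain ⟨h₁, h₁G, h₁X, rfl⟩ := hab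
  obtain ⟨h₂, h₂G, h₂X, rfl⟩ := hbc
  exact ⟨h₂ * h₁, mul_mem h₂G h₁G, fun x hx => by simp [h₁X x hx, h₂X x hx], rfl⟩

lemma transvectionCarries_of_apply_ne_zero {X : Set V} {a b : V} (hab : Q a b ≠ 0)
    (hX : ∀ x ∈ X, Q x a = Q x b) : TransvectionCarries hQ X a b := by
  refine ⟨symplecticTransvection hQ (b - a) (Q a b)⁻¹,
    symplecticTransvection_mem_transvectionGroup hQ _ _,
    fun x hx => symplecticTransvection_apply_of_eq_zero hQ _ (by simp [hX x hx]), ?_⟩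
  simp [symplecticTransvection_apply, hQ.self_eq_zero, hab]

lemma apply_eq_zero_of_mem_orthogonal (hQ : Q.IsAlt) {W : Submodule K V} {x w : V}
    (hx : x ∈ BilinForm.orthogonal Q W) (hw : w ∈ W) : Q x w = 0 :=
  hQ.eq_iff.mp (hx w hw)

lemma exists_mem_orthogonal_apply_ne_zero [FiniteDimensional K V] (hQ : Q.IsAlt)
    (hnd : Q.SeparatingLeft) {W : Submodule K V} (hW : Disjoint W (BilinForm.orthogonal Q W))
    {x : V}
    (hx : x ∈ BilinForm.orthogonal Q W) (hx0 : x ≠ 0) :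
    ∃ y ∈ BilinForm.orthogonal Q W, Q x y ≠ 0 := by
  by_contra! h
  have hxW : x ∈ BilinForm.orthogonal Q (BilinForm.orthogonal Q W) :=
    fun y hy => hQ.eq_iff.mp (h y hy)
  rw [BilinForm.orthogonal_orthogonal (hQ.isRefl.nondegenerate_iff_separatingLeft.mpr hnd)
    hQ.isRefl] at hxW
  exact hx0 (Submodule.disjoint_def.mp hW x hxW hx)

lemma exists_mem_orthogonal_apply_ne_zero_and [FiniteDimensional K V] (hQ : Q.IsAlt)
    (hnd : Q.SeparatingLeft) {W : Submodule K V} (hW : Disjoint W (BilinForm.orthogonal Q W))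
    {a b : V} (ha : a ∈ BilinForm.orthogonal Q W) (hb : b ∈ BilinForm.orthogonal Q W)
    (ha0 : a ≠ 0) (hb0 : b ≠ 0) : ∃ c ∈ BilinForm.orthogonal Q W, Q a c ≠ 0 ∧ Q c b ≠ 0 := by
  obtain ⟨y₁, hy₁, hay₁⟩ := exists_mem_orthogonal_apply_ne_zero hQ hnd hW ha ha0
  obtain ⟨y₂, hy₂, hby₂⟩ := exists_mem_orthogonal_apply_ne_zero hQ hnd hW hb hb0
  rw [Ne, hQ.eq_iff] at hby₂
  by_cases h₁ : Q y₁ b = 0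
  · by_cases h₂ : Q a y₂ = 0
    · exact ⟨y₁ + y₂, add_mem hy₁ hy₂, by simpa [h₂] using hay₁, by simpa [h₁] using hby₂⟩
    · exact ⟨y₂, hy₂, h₂, hby₂⟩
  · exact ⟨y₁, hy₁, hay₁, h₁⟩

lemma transvectionCarries_of_mem_orthogonal [FiniteDimensional K V] (hnd : Q.SeparatingLeft)
    {W : Submodule K V} (hW : Disjoint W (BilinForm.orthogonal Q W)) {a b : V}
    (ha : a ∈ BilinForm.orthogonal Q W) (hb : b ∈ BilinForm.orthogonal Q W)
    (ha0 : a ≠ 0) (hb0 : b ≠ 0) : TransvectionCarries hQ W a b := by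
  obtain ⟨c, hc, hac, hcb⟩ := exists_mem_orthogonal_apply_ne_zero_and hQ hnd hW ha hb ha0 hb0
  exact (transvectionCarries_of_apply_ne_zero hac fun w hw => by rw [ha w hw, hc w hw]).trans
    (transvectionCarries_of_apply_ne_zero hcb fun w hw => by rw [hc w hw, hb w hw])

lemma transvectionCarries_insert {W : Submodule K V} {u a b : V}
    (hu : u ∈ BilinForm.orthogonal Q W) (ha : a ∈ BilinForm.orthogonal Q W)
    (hb : b ∈ BilinForm.orthogonal Q W) (hua : Q u a = 1) (hub : Q u b = 1) :
    TransvectionCarries hQ (insert u W) a b := by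
  have hX {c d : V} (hc : c ∈ BilinForm.orthogonal Q W) (hd : d ∈ BilinForm.orthogonal Q W)
      (hcd : Q u c = Q u d) : ∀ x ∈ insert u (W : Set V), Q x c = Q x d := by
    rintro x (rfl | hx)
    exacts [hcd, by rw [hc x hx, hd x hx]]
  by_cases hab : Q a b = 0
  · have hc : a + u ∈ BilinForm.orthogonal Q W := add_mem ha hu
    have huc : Q u (a + u) = 1 := by simp [hua, hQ.self_eq_zero]
    have hac : Q a (a + u) ≠ 0 := by simp [hQ.self_eq_zero, ← hQ.neg u a, hua]
    have hcb : Q (a + u) b ≠ 0 := by simp [hab, hub]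
    exact (transvectionCarries_of_apply_ne_zero hac (hX ha hc (hua.trans huc.symm))).trans
      (transvectionCarries_of_apply_ne_zero hcb (hX hc hb (huc.trans hub.symm)))
  · exact transvectionCarries_of_apply_ne_zero hab (hX ha hb (hua.trans hub.symm))

lemma disjoint_sup_span_pair (hQ : Q.IsAlt) {W : Submodule K V}
    (hW : Disjoint W (BilinForm.orthogonal Q W)) {u v : V} (hu : u ∈ BilinForm.orthogonal Q W)
    (hv : v ∈ BilinForm.orthogonal Q W) (huv : Q u v = 1) :
    Disjoint (W ⊔ Submodule.span K {u, v})
      (BilinForm.orthogonal Q (W ⊔ Submodule.span K {u, v})) := by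
  rw [Submodule.disjoint_def]
  intro x hx hx'
  obtain ⟨w, hw, p, hp, rfl⟩ := Submodule.mem_sup.mp hx
  obtain ⟨s, t, rfl⟩ := Submodule.mem_span_pair.mp hp
  have hpair (y : V) (hy : y ∈ BilinForm.orthogonal Q W) :
      Q y (w + (s • u + t • v)) = s * Q y u + t * Q y v := by
    simp [apply_eq_zero_of_mem_orthogonal hQ hy hw]
  have ht : t = 0 := by
    have := hx' u (Submodule.mem_sup_right (Submodule.subset_span (by simp)))
    simpa [hpair u hu, hQ.self_eq_zero, huv] using this
  have hs : s = 0 := by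
    have := hx' v (Submodule.mem_sup_right (Submodule.subset_span (by simp)))
    simpa [hpair v hv, hQ.self_eq_zero, ← hQ.neg u v, huv] using this
  subst hs ht
  simp only [zero_smul, add_zero] at hx' ⊢
  exact Submodule.disjoint_def.mp hW w hw (BilinForm.orthogonal_le le_sup_left hx')

lemma apply_mem_orthogonal {W : Submodule K V} {g : (End K V)ˣ} (hg : g ∈ symplecticGroup Q)
    (hgW : ∀ w ∈ W, (g : End K V) w = w) {x : V} (hx : x ∈ BilinForm.orthogonal Q W) :
    (g : End K V) x ∈ BilinForm.orthogonal Q W := fun w hw => by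
  rw [← hgW w hw, hg, hx w hw]

lemma apply_eq_self_of_mem_sup_span_pair {f : End K V} {W : Submodule K V} {u v : V}
    (hW : ∀ w ∈ W, f w = w) (hu : f u = u) (hv : f v = v) {x : V}
    (hx : x ∈ W ⊔ Submodule.span K {u, v}) : f x = x := by
  have : W ⊔ Submodule.span K {u, v} ≤ LinearMap.eqLocus f 1 :=
    sup_le hW (Submodule.span_le.mpr (by simp [Set.insert_subset_iff, hu, hv]))
  exact this hx

/-- Correct `g` by transvections until it also fixes a hyperbolic pair `u, v` of `Wᗮ`. -/
lemma exists_transvectionGroup_mul_fixes_lt [FiniteDimensional K V] (hnd : Q.SeparatingLeft)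
    {W : Submodule K V} (hW : Disjoint W (BilinForm.orthogonal Q W)) (hWtop : W ≠ ⊤)
    {g : (End K V)ˣ} (hg : g ∈ symplecticGroup Q) (hgW : ∀ w ∈ W, (g : End K V) w = w) :
    ∃ h ∈ transvectionGroup hQ, ∃ W' : Submodule K V, W < W' ∧
      Disjoint W' (BilinForm.orthogonal Q W') ∧
      ∀ x ∈ W', ((h * g : (End K V)ˣ) : End K V) x = x := by
  obtain ⟨u, hu, hu0⟩ : ∃ u ∈ BilinForm.orthogonal Q W, u ≠ 0 := by
    refine Submodule.exists_mem_ne_zero_of_ne_bot fun h => hWtop ?_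
    rw [← BilinForm.orthogonal_orthogonal (hQ.isRefl.nondegenerate_iff_separatingLeft.mpr hnd)
      hQ.isRefl W, h, BilinForm.orthogonal_bot]
  obtain ⟨v', hv', huv'⟩ := exists_mem_orthogonal_apply_ne_zero hQ hnd hW hu hu0
  set v := (Q u v')⁻¹ • v'
  have hv : v ∈ BilinForm.orthogonal Q W := Submodule.smul_mem _ _ hv'
  have huv : Q u v = 1 := by simp [v, huv']
  have hgu0 : (g : End K V) u ≠ 0 := fun h => hu0 <| by
    simpa [← End.mul_apply] using congrArg (g⁻¹ : (End K V)ˣ).val h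
  obtain ⟨h₁, h₁G, h₁W, h₁u⟩ :=
    transvectionCarries_of_mem_orthogonal hnd hW (apply_mem_orthogonal hg hgW hu) hu hgu0 hu0
  set g₁ := h₁ * g
  have hg₁ : g₁ ∈ symplecticGroup Q := mul_mem (transvectionGroup_le_symplecticGroup hQ h₁G) hg
  have hg₁W (w : V) (hw : w ∈ W) : (g₁ : End K V) w = w := by
    simp [g₁, hgW w hw, h₁W w hw]
  have hg₁u : (g₁ : End K V) u = u := h₁u
  have hug₁v : Q u ((g₁ : End K V) v) = 1 := by rw [← hg₁u, hg₁, huv]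
  obtain ⟨h₂, h₂G, h₂X, h₂v⟩ :=
    transvectionCarries_insert hu (apply_mem_orthogonal hg₁ hg₁W hv) hv hug₁v huv
  refine ⟨h₂ * h₁, mul_mem h₂G h₁G, W ⊔ Submodule.span K {u, v},
    left_lt_sup.mpr fun h => hu0 (Submodule.disjoint_def.mp hW u (h (Submodule.subset_span
      (by simp))) hu), disjoint_sup_span_pair hQ hW hu hv huv, fun x hx => ?_⟩
  rw [mul_assoc]
  refine apply_eq_self_of_mem_sup_span_pair (fun w hw => ?_) ?_ h₂v hx
  · rw [Units.val_mul, End.mul_apply, hg₁W w hw, h₂X w (Set.mem_insert_of_mem _ hw)]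
  · rw [Units.val_mul, End.mul_apply, hg₁u, h₂X u (Set.mem_insert _ _)]

theorem mem_transvectionGroup_of_forall_mem_apply_eq [FiniteDimensional K V]
    (hnd : Q.SeparatingLeft) (W : Submodule K V) (hW : Disjoint W (BilinForm.orthogonal Q W))
    {g : (End K V)ˣ} (hg : g ∈ symplecticGroup Q) (hgW : ∀ w ∈ W, (g : End K V) w = w) :
    g ∈ transvectionGroup hQ := by
  induction W using WellFoundedGT.induction generalizing g with
  | _ W ih =>
  by_cases hWtop : W = ⊤
  · obtain rfl : g = 1 := Units.ext <| LinearMap.ext fun x => hgW x (hWtop ▸ Submodule.mem_top)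
    exact one_mem _
  obtain ⟨h, hG, W', hWW', hW', hfix⟩ :=
    exists_transvectionGroup_mul_fixes_lt hnd hW hWtop hg hgW
  have := ih W' hWW' hW' (mul_mem (transvectionGroup_le_symplecticGroup hQ hG) hg) hfix
  simpa using mul_mem (inv_mem hG) this

variable (hQ) in
theorem transvectionGroup_eq_symplecticGroup [FiniteDimensional K V] (hnd : Q.SeparatingLeft) :
    transvectionGroup hQ = symplecticGroup Q :=
  (transvectionGroup_le_symplecticGroup hQ).antisymm fun _ hg =>
    mem_transvectionGroup_of_forall_mem_apply_eq hnd ⊥ disjoint_bot_left hg (by simp)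

end Generation

section Linkage

variable {K V : Type*} [Field K] [AddCommGroup V] [Module K V] {Q : V →ₗ[K] V →ₗ[K] K}
  {R : Set V}

open Submodule (span)

/-- Stability of `R` under the transvections `x ↦ x + t Q(x,y) y` with `y ∈ R`; the product
`t Q(x,y)` is renamed `c`. -/
def TransvectionStable (Q : V →ₗ[K] V →ₗ[K] K) (R : Set V) : Prop :=
  ∀ x ∈ R, ∀ y ∈ R, Q x y ≠ 0 → ∀ c : K, x + c • y ∈ R

lemma transvectionStable_of_apply_mem (hQ : Q.IsAlt)
    (h : ∀ x ∈ R, ∀ δ ∈ R, ∀ t, (symplecticTransvection hQ δ t : End K V) x ∈ R) :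
    TransvectionStable Q R := fun x hx y hy hxy c => by
  simpa [symplecticTransvection_apply, div_mul_cancel₀ _ hxy] using h x hx y hy (c / Q x y)

lemma apply_mem_of_eq_biUnion {M : Subgroup (End K V)ˣ} {T : Set V}
    (hR : R = ⋃ t ∈ T, {x | ∃ g ∈ M, x = (g : End K V) t}) {g : (End K V)ˣ} (hg : g ∈ M)
    {x : V} (hx : x ∈ R) : (g : End K V) x ∈ R := by
  subst hR
  simp only [Set.mem_iUnion, Set.mem_ofPred_eq] at hx ⊢
  obtain ⟨t, ht, h, hh, rfl⟩ := hx
  exact ⟨t, ht, g * h, mul_mem hg hh, rfl⟩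

def linkComponent (Q : V →ₗ[K] V →ₗ[K] K) (R : Set V) (v : V) : Set V :=
  {z | Relation.ReflTransGen (fun x y => y ∈ R ∧ Q x y ≠ 0) v z}

lemma mem_linkComponent_self (v : V) : v ∈ linkComponent Q R v := Relation.ReflTransGen.refl

lemma linkComponent_subset {v : V} (hv : v ∈ R) : linkComponent Q R v ⊆ R := fun _ hz => by
  induction hz with
  | refl => exact hv
  | tail _ h _ => exact h.1

lemma apply_eq_zero_of_notMem_linkComponent {v δ : V} (hδ : δ ∈ R)
    (hδv : δ ∉ linkComponent Q R v) {u : V} (hu : u ∈ span K (linkComponent Q R v)) :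
    Q u δ = 0 := by
  have : span K (linkComponent Q R v) ≤ LinearMap.ker (Q.flip δ) :=
    Submodule.span_le.mpr fun x hx => by_contra fun h => hδv (.tail hx ⟨hδ, h⟩)
  exact this hu

lemma subset_span_linkComponent_union (hQ : Q.IsAlt) (v : V) :
    R ⊆ (span K (linkComponent Q R v) : Set V) ∪
      {x | ∀ u ∈ span K (linkComponent Q R v), Q x u = 0} := fun x hx => by
  by_cases hxv : x ∈ linkComponent Q R v
  · exact Or.inl (Submodule.subset_span hxv)
  · exact Or.inr fun u hu => hQ.eq_iff.mp (apply_eq_zero_of_notMem_linkComponent hx hxv hu)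

lemma exists_forall_apply_add_smul_ne_zero [Infinite K] (S : Finset V) {x y : V}
    (h : ∀ s ∈ S, Q s x ≠ 0 ∨ Q s y ≠ 0) : ∃ t : K, ∀ s ∈ S, Q s (x + t • y) ≠ 0 := by
  classical
  obtain ⟨t, ht⟩ := Infinite.exists_notMem_finset (S.image fun s => -Q s x / Q s y)
  refine ⟨t, fun s hs hst => ?_⟩
  rw [map_add, map_smul, smul_eq_mul] at hst
  by_cases hy : Q s y = 0
  · exact (h s hs).elim (fun hx => hx (by simpa [hy] using hst)) (· hy)
  · exact ht (Finset.mem_image.mpr ⟨s, hs, by rw [div_eq_iff hy]; linear_combination -hst⟩)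

lemma exists_mem_apply_ne_zero_of_span_eq_top (hnd : Q.SeparatingLeft) {S : Set V}
    (hS : span K S = ⊤) {v : V} (hv : v ≠ 0) : ∃ s ∈ S, Q v s ≠ 0 := by
  by_contra! h
  have : span K S ≤ LinearMap.ker (Q v) := Submodule.span_le.mpr h
  exact hv (hnd v fun y => this (hS ▸ Submodule.mem_top))

namespace TransvectionStable

/-- Induction along the path from `y` to `p`: a neighbour `z` of `p` off the hyperplane
`Q z₀ ⬝ = 0` is pushed back, one step `z ↦ z + t c` at a time, to a neighbour of `y`, and finally
to `y + t z`; generic choices of `t` keep every required pairing nonzero. -/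
lemma exists_of_mem_linkComponent [Infinite K] (hR : TransvectionStable Q R) (hQ : Q.IsAlt)
    {F : Finset V} {y z₀ : V} (hy : y ∈ R) (hyF : ∀ f ∈ F, Q f y ≠ 0) {p : V}
    (hp : p ∈ linkComponent Q R y) {z : V} (hz : z ∈ R) (hpz : Q p z ≠ 0) (hz₀z : Q z₀ z ≠ 0) :
    ∃ y' ∈ R, (∀ f ∈ F, Q f y' ≠ 0) ∧ Q z₀ y' ≠ 0 := by
  classical
  induction hp generalizing z with
  | refl =>
    obtain ⟨t, ht⟩ :=
      exists_forall_apply_add_smul_ne_zero (Q := Q) (insert z₀ F) (x := y) (y := z)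
        (by simpa [hz₀z] using fun f hf => Or.inl (hyF f hf))
    exact ⟨y + t • z, hR y hy z hz hpz t, fun f hf => ht f (by simp [hf]), ht z₀ (by simp)⟩
  | @tail b c _ hbc ih =>
    obtain ⟨t, ht⟩ := exists_forall_apply_add_smul_ne_zero (Q := Q) {z₀, b} (x := z) (y := c)
      (by simp [hz₀z, hbc.2])
    exact ih (hR z hz c hbc.1 (by rwa [Ne, hQ.eq_iff]) t) (ht b (by simp)) (ht z₀ (by simp))

theorem exists_mem_forall_apply_ne_zero [Infinite K] (hR : TransvectionStable Q R)
    (hQ : Q.IsAlt) (hnd : Q.SeparatingLeft) (hspan : span K R = ⊤)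
    (hconn : ∀ v ∈ R, v ≠ 0 → span K (linkComponent Q R v) = ⊤)
    {F : Finset V} (hF : F.Nonempty) (hF0 : ∀ z ∈ F, z ≠ 0) : ∃ y ∈ R, ∀ z ∈ F, Q z y ≠ 0 := by
  classical
  induction hF using Finset.Nonempty.cons_induction with
  | singleton z => simpa using exists_mem_apply_ne_zero_of_span_eq_top hnd hspan (hF0 z (by simp))
  | cons z₀ F _ hF ih =>
    obtain ⟨y, hy, hyF⟩ := ih fun z hz => hF0 z (Finset.mem_cons_of_mem hz)
    have hy0 : y ≠ 0 := fun h => hyF _ hF.choose_spec (by simp [h])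
    obtain ⟨c, hc, hz₀c⟩ := exists_mem_apply_ne_zero_of_span_eq_top hnd (hconn y hy hy0)
      (hF0 z₀ (Finset.mem_cons_self _ _))
    obtain ⟨δ, hδ, hcδ⟩ := exists_mem_apply_ne_zero_of_span_eq_top hnd hspan
      (fun h => hz₀c (by simp [h]) : c ≠ 0)
    obtain ⟨t, ht⟩ := exists_forall_apply_add_smul_ne_zero (Q := Q) {c, z₀} (x := c) (y := δ)
      (by simp [hcδ, hz₀c])
    obtain ⟨y', hy', hy'F, hy'z₀⟩ := hR.exists_of_mem_linkComponent hQ hy hyF hc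
      (hR c (linkComponent_subset hy hc) δ hδ hcδ t) (ht c (by simp)) (ht z₀ (by simp))
    exact ⟨y', hy', by simpa [hy'z₀] using hy'F⟩

lemma smul_mem (hR : TransvectionStable Q R) (hQ : Q.IsAlt) (hnd : Q.SeparatingLeft)
    (hspan : span K R = ⊤) {a : V} (ha : a ∈ R) (ha0 : a ≠ 0) {c : K} (hc : c ≠ 0) : c • a ∈ R := by
  obtain ⟨y, hy, hay⟩ := exists_mem_apply_ne_zero_of_span_eq_top hnd hspan ha0
  have hya : y + c • a ∈ R := hR y hy a ha (by rwa [Ne, hQ.eq_iff]) c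
  have : Q (y + c • a) y ≠ 0 := by simp [hQ.self_eq_zero, hc, hay]
  simpa using hR _ hya y hy this (-1)

/-- Through a common neighbour `y` of `a`, `b` and `a + b`: `a ↦ a + s y ↦ a + s y + b ↦ a + b`. -/
lemma add_mem [Infinite K] (hR : TransvectionStable Q R) (hQ : Q.IsAlt) (hnd : Q.SeparatingLeft)
    (hspan : span K R = ⊤)
    (hconn : ∀ v ∈ R, v ≠ 0 → span K (linkComponent Q R v) = ⊤) {a b : V} (ha : a ∈ R)
    (hb : b ∈ R) (ha0 : a ≠ 0) (hb0 : b ≠ 0) (hab0 : a + b ≠ 0) : a + b ∈ R := by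
  classical
  obtain ⟨y, hy, hyF⟩ := hR.exists_mem_forall_apply_ne_zero hQ hnd hspan hconn
    (F := {a, b, a + b}) (by simp) (by simp [ha0, hb0, hab0])
  obtain ⟨s, hs⟩ := exists_forall_apply_add_smul_ne_zero (Q := Q) {b} (x := a) (y := y)
    (by simpa using Or.inr (hyF b (by simp)))
  have h₁ : a + s • y ∈ R := hR a ha y hy (hyF a (by simp)) s
  have h₂ : a + s • y + (1 : K) • b ∈ R :=
    hR _ h₁ b hb (by rw [Ne, hQ.eq_iff]; exact hs b (by simp)) 1
  have h₃ : Q (a + s • y + (1 : K) • b) y ≠ 0 := by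
    simpa [hQ.self_eq_zero] using hyF (a + b) (by simp)
  convert hR _ h₂ y hy h₃ (-s) using 1
  module

theorem mem_of_ne_zero [Infinite K] (hR : TransvectionStable Q R) (hQ : Q.IsAlt)
    (hnd : Q.SeparatingLeft) (hspan : span K R = ⊤)
    (hconn : ∀ v ∈ R, v ≠ 0 → span K (linkComponent Q R v) = ⊤) {z : V} (hz : z ≠ 0) :
    z ∈ R := by
  let L : Submodule K V :=
    { carrier := insert 0 R
      zero_mem' := Set.mem_insert _ _
      add_mem' := fun {a b} ha hb => by
        by_cases ha0 : a = 0; · simpa [ha0] using hb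
        by_cases hb0 : b = 0; · simpa [hb0] using ha
        by_cases hab0 : a + b = 0; · exact Or.inl hab0
        exact Or.inr <| hR.add_mem hQ hnd hspan hconn (ha.resolve_left ha0)
          (hb.resolve_left hb0) ha0 hb0 hab0
      smul_mem' := fun c a ha => by
        by_cases h : c = 0 ∨ a = 0; · exact Or.inl (smul_eq_zero.mpr h)
        obtain ⟨hc, ha0⟩ := not_or.mp h
        exact Or.inr (hR.smul_mem hQ hnd hspan (ha.resolve_left ha0) ha0 hc) }
  have hzL : z ∈ L := Submodule.span_le.mpr (Set.subset_insert 0 R) (hspan ▸ Submodule.mem_top)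
  exact hzL.resolve_left hz

end TransvectionStable

end Linkage

section AlgebraicSubgroup

variable {V : Type*} [AddCommGroup V] [Module ℂ V]

lemma isAlgSubgroup_iff {H : Subgroup (End ℂ V)ˣ} :
    IsAlgSubgroup V H ↔ ∃ S : Set (End ℂ V → ℂ), (∀ f ∈ S, IsPolyFun V f) ∧
      ∀ g : (End ℂ V)ˣ, g ∈ H ↔ ∀ f ∈ S, f g = 0 := by
  constructor
  · rintro ⟨_, ⟨S, hS, rfl⟩, hH⟩
    exact ⟨S, hS, fun g => Set.ext_iff.mp hH g⟩
  · rintro ⟨S, hS, hH⟩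
    exact ⟨_, ⟨S, hS, rfl⟩, Set.ext hH⟩

lemma IsPolyFun.exists_polynomial_eval {f : End ℂ V → ℂ} (hf : IsPolyFun V f) (A N : End ℂ V) :
    ∃ p : Polynomial ℂ, ∀ t : ℂ, f (A + t • N) = p.eval t := by
  induction hf using Algebra.adjoin_induction with
  | mem g hg =>
    obtain ⟨φ, rfl⟩ := hg
    exact ⟨.C (φ A) + .X * .C (φ N), fun t => by simp; ring⟩
  | algebraMap r => exact ⟨.C r, fun t => by simp⟩
  | add _ _ _ _ hp hq =>
    obtain ⟨p, hp⟩ := hp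
    obtain ⟨q, hq⟩ := hq
    exact ⟨p + q, fun t => by simp [hp, hq]⟩
  | mul _ _ _ _ hp hq =>
    obtain ⟨p, hp⟩ := hp
    obtain ⟨q, hq⟩ := hq
    exact ⟨p * q, fun t => by simp [hp, hq]⟩

lemma isPolyFun_apply_self [FiniteDimensional ℂ V] (B : End ℂ V →ₗ[ℂ] End ℂ V →ₗ[ℂ] ℂ) :
    IsPolyFun V fun A => B A A := by
  let b := Module.finBasis ℂ (End ℂ V)
  have : (fun A => B A A) = ∑ i, fun A => b.coord i A * B (b i) A := by
    funext A
    calc B A A = B (∑ i, b.repr A i • b i) A := by rw [b.sum_repr]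
      _ = _ := by simp only [map_sum, map_smul, LinearMap.coe_sum, Finset.sum_apply,
        LinearMap.smul_apply, smul_eq_mul, Basis.coord_apply]
  rw [IsPolyFun, this]
  exact Subalgebra.sum_mem _ fun i _ =>
    mul_mem (Algebra.subset_adjoin ⟨b.coord i, rfl⟩) (Algebra.subset_adjoin ⟨B (b i), rfl⟩)

/-- The powers `(1 + N)ⁿ = 1 + n N` lie in `H`, and a polynomial in `t` vanishing at every
`n : ℕ` vanishes. -/
lemma IsAlgSubgroup.mem_of_val_eq_one_add_smul {H : Subgroup (End ℂ V)ˣ}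
    (hH : IsAlgSubgroup V H) {N : End ℂ V} (hN : N * N = 0) {g : (End ℂ V)ˣ} (hg : g ∈ H)
    (hgN : (g : End ℂ V) = 1 + N) {h : (End ℂ V)ˣ} {t : ℂ} (hh : (h : End ℂ V) = 1 + t • N) :
    h ∈ H := by
  obtain ⟨S, hS, hmem⟩ := isAlgSubgroup_iff.mp hH
  have hpow (n : ℕ) : ((g ^ n : (End ℂ V)ˣ) : End ℂ V) = 1 + (n : ℂ) • N := by
    induction n with
    | zero => simp
    | succ n ih =>
      rw [pow_succ, Units.val_mul, ih, hgN]
      simp only [add_mul, mul_add, one_mul, mul_one, smul_mul_assoc, hN, smul_zero]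
      push_cast
      module
  refine (hmem h).mpr fun f hf => ?_
  obtain ⟨p, hp⟩ := (hS f hf).exists_polynomial_eval 1 N
  have hp0 : p = 0 := p.eq_zero_of_infinite_isRoot <|
    Set.infinite_of_injective_forall_mem Nat.cast_injective fun n : ℕ => by
      simpa [← hp, ← hpow] using (hmem _).mp (pow_mem hg n) f hf
  rw [hh, hp, hp0, Polynomial.eval_zero]

variable [FiniteDimensional ℂ V]

lemma isAlgSubgroup_symplecticGroup (Q : V →ₗ[ℂ] V →ₗ[ℂ] ℂ) :
    IsAlgSubgroup V (symplecticGroup Q) := by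
  refine isAlgSubgroup_iff.mpr ⟨Set.range fun p : V × V => fun A => Q (A p.1) (A p.2) - Q p.1 p.2,
    ?_, fun g => ?_⟩
  · rintro _ ⟨⟨x, y⟩, rfl⟩
    have hB := isPolyFun_apply_self (Q.compl₁₂ (LinearMap.applyₗ x) (LinearMap.applyₗ y))
    exact sub_mem hB (Subalgebra.algebraMap_mem _ (Q x y))
  · simp only [Set.forall_mem_range, Prod.forall, sub_eq_zero]
    rfl

lemma isAlgSubgroup_submoduleStabilizer (U : Submodule ℂ V) :
    IsAlgSubgroup V (submoduleStabilizer U) := by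
  refine isAlgSubgroup_iff.mpr ⟨{f | ∃ u ∈ U, ∃ φ : Dual ℂ V, U ≤ LinearMap.ker φ ∧
    f = fun A => φ (A u)}, ?_, fun g => ⟨?_, fun hg u hu => ?_⟩⟩
  · rintro _ ⟨u, -, φ, -, rfl⟩
    exact Algebra.subset_adjoin ⟨φ.comp (LinearMap.applyₗ u), rfl⟩
  · rintro hg _ ⟨u, hu, φ, hφ, rfl⟩
    exact hφ (hg u hu)
  · by_contra hgu
    obtain ⟨φ, hφu, hφU⟩ := Submodule.exists_dual_map_eq_bot_of_notMem hgu inferInstance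
    exact hφu (hg _ ⟨u, hu, φ, LinearMap.le_ker_iff_map.mpr hφU, rfl⟩)

end AlgebraicSubgroup

section Hull

variable {V : Type*} [AddCommGroup V] [Module ℂ V] {Q : V →ₗ[ℂ] V →ₗ[ℂ] ℂ} {R : Set V}

variable (Q R) in
def transvectionHull : Subgroup (End ℂ V)ˣ :=
  sInf {H | IsAlgSubgroup V H ∧ ∀ δ ∈ R, ∃ g ∈ H, ∀ x, (g : End ℂ V) x = x + Q x δ • δ}

lemma transvectionHull_le (hQ : Q.IsAlt) {H : Subgroup (End ℂ V)ˣ} (hH : IsAlgSubgroup V H)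
    (hR : ∀ δ ∈ R, symplecticTransvection hQ δ 1 ∈ H) : transvectionHull Q R ≤ H :=
  sInf_le ⟨hH, fun δ hδ => ⟨_, hR δ hδ, fun x => by simp [symplecticTransvection_apply]⟩⟩

lemma symplecticTransvection_mem_transvectionHull (hQ : Q.IsAlt) {δ : V} (hδ : δ ∈ R) (t : ℂ) :
    symplecticTransvection hQ δ t ∈ transvectionHull Q R := by
  refine Subgroup.mem_sInf.mpr fun H ⟨hH, hHR⟩ => ?_
  obtain ⟨g, hg, hgδ⟩ := hHR δ hδ
  refine hH.mem_of_val_eq_one_add_smul (N := (Q.flip δ).smulRight δ) ?_ hg ?_ rfl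
  · ext x
    simp [hQ.self_eq_zero]
  · ext x
    simp [hgδ]

lemma transvectionGroup_le_transvectionHull (hQ : Q.IsAlt) (hR : ∀ δ : V, δ ≠ 0 → δ ∈ R) :
    transvectionGroup hQ ≤ transvectionHull Q R :=
  (Subgroup.closure_le _).mpr <| Set.range_subset_iff.mpr fun ⟨δ, t⟩ => by
    rcases eq_or_ne δ 0 with rfl | hδ
    · exact (symplecticTransvection_zero hQ t).symm ▸ one_mem _
    · exact symplecticTransvection_mem_transvectionHull hQ (hR δ hδ) t

variable [FiniteDimensional ℂ V]

lemma transvectionHull_le_symplecticGroup (hQ : Q.IsAlt) :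
    transvectionHull Q R ≤ symplecticGroup Q :=
  transvectionHull_le hQ (isAlgSubgroup_symplecticGroup Q) fun δ _ =>
    symplecticTransvection_mem_symplecticGroup hQ δ 1

lemma transvectionHull_le_submoduleStabilizer (hQ : Q.IsAlt) {U : Submodule ℂ V}
    (hRU : R ⊆ U ∪ {x | ∀ u ∈ U, Q x u = 0}) : transvectionHull Q R ≤ submoduleStabilizer U :=
  transvectionHull_le hQ (isAlgSubgroup_submoduleStabilizer U) fun δ hδ u hu => by
    rcases hRU hδ with hδU | hδU
    · simpa [symplecticTransvection_apply] using U.add_mem hu (U.smul_mem (Q u δ) hδU)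
    · rw [symplecticTransvection_apply_of_eq_zero hQ 1 (hQ.eq_iff.mp (hδU u hu))]
      exact hu

end Hull

/-- Deligne's criterion, symplectic case.  Let `V` be a finite-dimensional
complex vector space with a non-degenerate alternating bilinear form `Q`, and `R ⊆ V` a
spanning set.  Let `M` be the smallest algebraic subgroup of `GL(V)` containing all the
transvections `x ↦ x + Q(x,δ)δ` for `δ ∈ R` (these lie in `Sp(V,Q)`, so `M ⊆ Sp(V,Q)`).
If `R` is a finite union of `M`-orbits, then either there is a nontrivial `M`-invariant
subspace `U` with `R ⊆ U ∪ U^⊥`, or `M = Sp(V,Q)`. -/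
theorem stmt_1 (V : Type*) [AddCommGroup V] [Module ℂ V] [FiniteDimensional ℂ V]
    (Q : V →ₗ[ℂ] V →ₗ[ℂ] ℂ)
    (halt : ∀ x, Q x x = 0)
    (hnd : ∀ x, (∀ y, Q x y = 0) → x = 0)
    (R : Set V) (hspan : Submodule.span ℂ R = ⊤)
    (M : Subgroup (Module.End ℂ V)ˣ)
    (hM : M = sInf {H : Subgroup (Module.End ℂ V)ˣ | IsAlgSubgroup V H ∧
      ∀ δ ∈ R, ∃ g ∈ H, ∀ x, (g : Module.End ℂ V) x = x + Q x δ • δ})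
    (horb : ∃ T : Set V, T.Finite ∧
      R = ⋃ t ∈ T, {x | ∃ g ∈ M, x = (g : Module.End ℂ V) t}) :
    (∃ U : Submodule ℂ V, U ≠ ⊥ ∧ U ≠ ⊤ ∧
      (∀ g ∈ M, ∀ u ∈ U, (g : Module.End ℂ V) u ∈ U) ∧
      R ⊆ (U : Set V) ∪ {x | ∀ u ∈ U, Q x u = 0}) ∨
    (M : Set (Module.End ℂ V)ˣ) =
      {g : (Module.End ℂ V)ˣ | ∀ x y, Q ((g : Module.End ℂ V) x) ((g : Module.End ℂ V) y) = Q x y} := by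
  obtain ⟨T, -, hT⟩ := horb
  subst hM
  have hR : TransvectionStable Q R := transvectionStable_of_apply_mem halt fun x hx δ hδ t =>
    apply_mem_of_eq_biUnion hT (symplecticTransvection_mem_transvectionHull halt hδ t) hx
  by_cases hconn : ∀ v ∈ R, v ≠ 0 → Submodule.span ℂ (linkComponent Q R v) = ⊤
  · right
    have hall (δ : V) (hδ : δ ≠ 0) : δ ∈ R := hR.mem_of_ne_zero halt hnd hspan hconn hδ
    refine congrArg SetLike.coe ((transvectionHull_le_symplecticGroup halt).antisymm ?_)
    rw [← transvectionGroup_eq_symplecticGroup halt hnd]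
    exact transvectionGroup_le_transvectionHull halt hall
  · left
    obtain ⟨v, -, hv0, hU⟩ : ∃ v ∈ R, v ≠ 0 ∧ Submodule.span ℂ (linkComponent Q R v) ≠ ⊤ := by
      simpa using hconn
    have hRU := subset_span_linkComponent_union (R := R) halt v
    refine ⟨_, ?_, hU, fun g hg => transvectionHull_le_submoduleStabilizer halt hRU hg, hRU⟩
    exact Submodule.ne_bot_iff _ |>.mpr ⟨v, Submodule.subset_span (mem_linkComponent_self v), hv0⟩
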